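/- arXiv:2503.14569 — 3 statements merged into one kernel-verified Lean document; each statement's English description precedes it below -/
import Mathlib

section
/- Let E : ℝ^d → ℝ be continuously differentiable with Z = ∫_{ℝ^d} exp(−E(y)) dy ∈ (0, ∞), and let p(y) = exp(−E(y))/Z be the associated Boltzmann probability density. Fix α > 0 and σ > 0 and a point x ∈ ℝ^d, and assume that the functions y ↦ p(y)·φ_{α,σ}(x', y) and y ↦ ‖∇E(y)‖·p(y)·φ_{α,σ}(x', y) are integrable for all x' in a neighborhood of x, that p(y)·φ_{α,σ}(x, y) → 0 as ‖y‖ → ∞, and that differentiation under the integral sign in x is justified by an integrable dominating function. Then the score of the noised marginal satisfies ∇_x log p_{α,σ}(x) = (1/α) · ∫_{ℝ^d} (−∇E(y)) · p(y | x) dy, i.e., the score at noise level (α, σ) equals (1/α) times the posterior expectation of the force −∇E evaluated at the clean sample. -/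
open MeasureTheory Filter

/-- The (unnormalized) Gaussian transition kernel
`φ_{α,σ}(x, y) = exp(−‖x − α·y‖²/(2σ²))`. -/
noncomputable def gaussKernel (d : ℕ) (α σ : ℝ)
    (x y : EuclideanSpace ℝ (Fin d)) : ℝ :=
  Real.exp (-‖x - α • y‖ ^ 2 / (2 * σ ^ 2))

open InnerProductSpace

/-! The kernel depends on `(x, y)` only through `x - α • y`, so its `x`-derivative is `-α⁻¹`
times its `y`-derivative. Differentiating the marginal under the integral sign and integrating by
parts in `y` therefore moves the derivative onto `p`, whose gradient is `-p ∇E`; dividing by the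
marginal, as the logarithm does, turns the result into a posterior average. -/

section

variable {V : Type*} [NormedAddCommGroup V] [NormedSpace ℝ V]

theorem hasFDerivAt_mul_comp_sub_smul (c α : ℝ) {ψ : V → ℝ} {x y : V}
    (hψ : DifferentiableAt ℝ ψ (x - α • y)) :
    HasFDerivAt (fun x' => c * ψ (x' - α • y)) (c • fderiv ℝ ψ (x - α • y)) x :=
  (hψ.hasFDerivAt.comp x (hasFDerivAt_sub_const _)).const_mul c

theorem hasFDerivAt_comp_const_sub_smul (α : ℝ) {ψ : V → ℝ} {x y : V}
    (hψ : DifferentiableAt ℝ ψ (x - α • y)) :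
    HasFDerivAt (fun y' => ψ (x - α • y')) (-α • fderiv ℝ ψ (x - α • y)) y := by
  have hlin : HasFDerivAt (fun y' => x - α • y') (-α • ContinuousLinearMap.id ℝ V) y := by
    simpa using ((hasFDerivAt_id y).const_smul α).const_sub x
  exact (hψ.hasFDerivAt.comp y hlin).congr_fderiv (by ext v; simp)

theorem continuous_smul_fderiv_comp_const_sub_smul {p ψ : V → ℝ} (hp : Continuous p)
    (hψ : ContDiff ℝ 1 ψ) (α : ℝ) (x : V) :
    Continuous fun y => p y • fderiv ℝ ψ (x - α • y) :=
  hp.smul ((hψ.continuous_fderiv one_ne_zero).comp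
    (continuous_const.sub (continuous_const_smul α)))

variable [FiniteDimensional ℝ V] [MeasurableSpace V] [BorelSpace V] {μ : Measure V}

theorem hasFDerivAt_integral_mul_comp_sub_smul {p ψ : V → ℝ} (hp : Continuous p)
    (hψ : ContDiff ℝ 1 ψ) (α : ℝ) {x : V} {ε : ℝ} (hε : 0 < ε) {bound : V → ℝ}
    (hbound : Integrable bound μ) (hint : Integrable (fun y => p y * ψ (x - α • y)) μ)
    (hle : ∀ y, ∀ x' ∈ Metric.ball x ε,
      ‖fderiv ℝ (fun x'' => p y * ψ (x'' - α • y)) x'‖ ≤ bound y) :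
    HasFDerivAt (fun x' => ∫ y, p y * ψ (x' - α • y) ∂μ)
      (∫ y, p y • fderiv ℝ ψ (x - α • y) ∂μ) x := by
  have hderiv y x' := hasFDerivAt_mul_comp_sub_smul (p y) α (hψ.differentiable one_ne_zero _)
    (x := x') (y := y)
  have hmeas x' : AEStronglyMeasurable (fun y => p y * ψ (x' - α • y)) μ :=
    (hp.mul (hψ.continuous.comp
      (continuous_const.sub (continuous_const_smul α)))).aestronglyMeasurable
  exact hasFDerivAt_integral_of_dominated_of_fderiv_le (Metric.ball_mem_nhds x hε)
    (Eventually.of_forall hmeas) hint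
    (continuous_smul_fderiv_comp_const_sub_smul hp hψ α x).aestronglyMeasurable
    (Eventually.of_forall fun y x' hx' => (hderiv y x').fderiv ▸ hle y x' hx') hbound
    (Eventually.of_forall fun y x' _ => hderiv y x')

variable [μ.IsAddHaarMeasure]

theorem integral_smul_fderiv_comp_sub_smul {p ψ : V → ℝ} (hp : Differentiable ℝ p)
    (hψ : Differentiable ℝ ψ) {α : ℝ} (hα : α ≠ 0) (x : V)
    (hint : Integrable (fun y => p y * ψ (x - α • y)) μ)
    (hint_ψ : Integrable (fun y => p y • fderiv ℝ ψ (x - α • y)) μ)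
    (hint_p : Integrable (fun y => ψ (x - α • y) • fderiv ℝ p y) μ) :
    ∫ y, p y • fderiv ℝ ψ (x - α • y) ∂μ = α⁻¹ • ∫ y, ψ (x - α • y) • fderiv ℝ p y ∂μ := by
  have hderiv y := hasFDerivAt_comp_const_sub_smul α (hψ (x - α • y))
  ext v
  have hibp := integral_mul_fderiv_eq_neg_fderiv_mul_of_integrable (μ := μ) (v := v)
    (f := p) (g := fun y => ψ (x - α • y))
    (by simpa only [mul_comm (fderiv ℝ p _ v), smul_apply, smul_eq_mul]
      using hint_p.apply_continuousLinearMap v)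
    (by simpa only [(hderiv _).fderiv, smul_apply, smul_eq_mul, mul_left_comm _ (-α)]
      using (hint_ψ.apply_continuousLinearMap v).const_mul (-α))
    hint (fun y _ => hp y) (fun y _ => (hderiv y).differentiableAt)
  simp only [(hderiv _).fderiv, smul_apply, smul_eq_mul, mul_left_comm _ (-α),
    integral_const_mul, mul_comm (fderiv ℝ p _ v)] at hibp
  rw [neg_mul, neg_inj] at hibp
  simp only [smul_apply, ContinuousLinearMap.integral_apply hint_ψ,
    ContinuousLinearMap.integral_apply hint_p, smul_eq_mul]
  rw [← hibp, inv_mul_cancel_left₀ hα]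

end

section

variable {F : Type*} [NormedAddCommGroup F] [InnerProductSpace ℝ F]

theorem contDiff_exp_neg_norm_sq_div {n : WithTop ℕ∞} (σ : ℝ) :
    ContDiff ℝ n fun z : F => Real.exp (-‖z‖ ^ 2 / (2 * σ ^ 2)) :=
  Real.contDiff_exp.comp ((contDiff_norm_sq ℝ).neg.div_const _)

variable [CompleteSpace F]

theorem norm_gradient (f : F → ℝ) (x : F) : ‖gradient f x‖ = ‖fderiv ℝ f x‖ :=
  (toDual ℝ F).symm.norm_map _

theorem gradient_exp_neg_div_const {f : F → ℝ} {y : F} (hf : DifferentiableAt ℝ f y) (c : ℝ) :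
    gradient (fun z => Real.exp (-f z) / c) y = -(Real.exp (-f y) / c) • gradient f y := by
  have h := (hf.hasFDerivAt.neg.exp).mul_const c⁻¹
  simp only [← div_eq_mul_inv, Pi.neg_apply] at h
  rw [gradient, h.fderiv, gradient]
  simp only [map_smul, map_neg, smul_smul, smul_neg, neg_smul, div_eq_inv_mul]

variable [FiniteDimensional ℝ F] [MeasurableSpace F] [BorelSpace F] {μ : Measure F}
  [μ.IsAddHaarMeasure]

theorem gradient_log_integral_mul_comp_sub_smul {p ψ : F → ℝ} (hp : Differentiable ℝ p)
    (hψ : ContDiff ℝ 1 ψ) {α : ℝ} (hα : α ≠ 0) {x : F}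
    (hint : Integrable (fun y => p y * ψ (x - α • y)) μ)
    (hint_p : Integrable (fun y => ψ (x - α • y) • gradient p y) μ)
    (hm : ∫ y, p y * ψ (x - α • y) ∂μ ≠ 0)
    (hdom : ∃ (ε : ℝ) (bound : F → ℝ), 0 < ε ∧ Integrable bound μ ∧
      ∀ y, ∀ x' ∈ Metric.ball x ε,
        ‖gradient (fun x'' => p y * ψ (x'' - α • y)) x'‖ ≤ bound y) :
    gradient (fun x' => Real.log (∫ y, p y * ψ (x' - α • y) ∂μ)) x
      = (α⁻¹ * (∫ y, p y * ψ (x - α • y) ∂μ)⁻¹) • ∫ y, ψ (x - α • y) • gradient p y ∂μ := by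
  obtain ⟨ε, bound, hε, hbound, hle⟩ := hdom
  simp only [norm_gradient] at hle
  have hint_ψ : Integrable (fun y => p y • fderiv ℝ ψ (x - α • y)) μ := by
    refine hbound.mono' ?_ (Eventually.of_forall fun y => ?_)
    · exact
        (continuous_smul_fderiv_comp_const_sub_smul hp.continuous hψ α x).aestronglyMeasurable
    · have := hle y x (Metric.mem_ball_self hε)
      rwa [(hasFDerivAt_mul_comp_sub_smul (p y) α (hψ.differentiable one_ne_zero _)).fderiv] at this
  have hint_fderiv_p : Integrable (fun y => ψ (x - α • y) • fderiv ℝ p y) μ := by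
    simpa only [map_smul, toDual_gradient] using
      ((toDual ℝ F).integrable_comp_iff).2 hint_p
  have hderiv := hasFDerivAt_integral_mul_comp_sub_smul hp.continuous hψ α hε hbound hint hle
  rw [integral_smul_fderiv_comp_sub_smul hp (hψ.differentiable one_ne_zero) hα x hint hint_ψ
    hint_fderiv_p] at hderiv
  rw [gradient, (hderiv.log hm).fderiv, map_smul, map_smul, smul_smul, mul_comm]
  congr 1
  calc (toDual ℝ F).symm (∫ y, ψ (x - α • y) • fderiv ℝ p y ∂μ)
      = ∫ y, (toDual ℝ F).symm (ψ (x - α • y) • fderiv ℝ p y) ∂μ :=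
        ((toDual ℝ F).symm.toLinearIsometry.integral_comp_comm _).symm
    _ = ∫ y, ψ (x - α • y) • gradient p y ∂μ := by simp only [map_smul, gradient]

end

theorem score_eq_posterior_force_average_general (d : ℕ)
    (E : EuclideanSpace ℝ (Fin d) → ℝ) (hE : ContDiff ℝ 1 E)
    (hZpos : 0 < ∫ y, Real.exp (-E y))
    (α σ : ℝ) (hα : 0 < α)
    (x : EuclideanSpace ℝ (Fin d))
    (p : EuclideanSpace ℝ (Fin d) → ℝ)
    (hp : p = fun y => Real.exp (-E y) / ∫ z, Real.exp (-E z))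
    (hInt1 : ∀ᶠ x' in nhds x, Integrable (fun y => p y * gaussKernel d α σ x' y))
    (hInt2 : ∀ᶠ x' in nhds x,
      Integrable (fun y => ‖gradient E y‖ * (p y * gaussKernel d α σ x' y)))
    (hDom : ∃ (ε : ℝ) (bound : EuclideanSpace ℝ (Fin d) → ℝ), 0 < ε ∧
      Integrable bound ∧
      ∀ y, ∀ x' ∈ Metric.ball x ε,
        ‖gradient (fun x'' => p y * gaussKernel d α σ x'' y) x'‖ ≤ bound y) :
    gradient (fun x' => Real.log (∫ y, p y * gaussKernel d α σ x' y)) x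
      = (1 / α) • ∫ y,
          ((p y * gaussKernel d α σ x y) / ∫ z, p z * gaussKernel d α σ x z) •
            (-(gradient E y)) := by
  have hE_diff := hE.differentiable one_ne_zero
  have hp_diff : Differentiable ℝ p := by rw [hp]; fun_prop
  have hp_pos : ∀ y, 0 < p y := fun y => by rw [hp]; exact div_pos (Real.exp_pos _) hZpos
  have hgrad_p : ∀ y, gradient p y = -p y • gradient E y := fun y => by
    subst hp; exact gradient_exp_neg_div_const (hE_diff y) _
  have hψ := contDiff_exp_neg_norm_sq_div (F := EuclideanSpace ℝ (Fin d)) (n := 1) σ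
  have hK_cont : Continuous (gaussKernel d α σ x) :=
    hψ.continuous.comp (continuous_const.sub (continuous_const_smul α))
  have hK_pos : ∀ y, 0 < gaussKernel d α σ x y := fun y => Real.exp_pos _
  have hint := hInt1.self_of_nhds
  have hm : 0 < ∫ y, p y * gaussKernel d α σ x y :=
    integral_pos_of_integrable_nonneg_nonzero (x := 0) (hp_diff.continuous.mul hK_cont) hint
      (fun y => (mul_pos (hp_pos y) (hK_pos y)).le) (mul_pos (hp_pos 0) (hK_pos 0)).ne'
  have hint_p : Integrable (fun y => gaussKernel d α σ x y • gradient p y) := by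
    have hgradE_cont : Continuous (gradient E) :=
      (toDual ℝ _).symm.continuous.comp (hE.continuous_fderiv one_ne_zero)
    simp only [hgrad_p]
    refine hInt2.self_of_nhds.mono'
      (hK_cont.smul (hp_diff.continuous.neg.smul hgradE_cont)).aestronglyMeasurable
      (Eventually.of_forall fun y => le_of_eq ?_)
    rw [norm_smul, norm_smul, norm_neg, Real.norm_of_nonneg (hK_pos y).le,
      Real.norm_of_nonneg (hp_pos y).le]
    ring
  have hposterior y : (p y * gaussKernel d α σ x y / ∫ z, p z * gaussKernel d α σ x z) •
      -gradient E y
        = (∫ z, p z * gaussKernel d α σ x z)⁻¹ • gaussKernel d α σ x y • gradient p y := by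
    rw [hgrad_p, smul_smul, smul_smul, smul_neg, ← neg_smul]
    congr 1
    ring
  refine (gradient_log_integral_mul_comp_sub_smul hp_diff hψ hα.ne' hint hint_p hm.ne'
    hDom).trans ?_
  simp only [← gaussKernel.eq_1, hposterior, one_div]
  rw [integral_smul, smul_smul]

/-- **Score of the noised Boltzmann marginal as a posterior force average.**
Let `E : ℝ^d → ℝ` be `C¹` with `Z = ∫ exp(−E(y)) dy ∈ (0, ∞)` and let
`p(y) = exp(−E(y))/Z` be the associated Boltzmann density.  Fix `α > 0`, `σ > 0` and
`x ∈ ℝ^d`; assume `y ↦ p(y)φ_{α,σ}(x', y)` and `y ↦ ‖∇E(y)‖ p(y) φ_{α,σ}(x', y)` are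
integrable for `x'` near `x`, that `p(y) φ_{α,σ}(x, y) → 0` as `‖y‖ → ∞`, and that
differentiation under the integral sign in `x` is justified by an integrable
dominating function.  Then
`∇_x log p_{α,σ}(x) = (1/α) ∫ (−∇E(y)) p(y | x) dy`. -/
theorem score_eq_posterior_force_average (d : ℕ)
    (E : EuclideanSpace ℝ (Fin d) → ℝ) (hE : ContDiff ℝ 1 E)
    (hZint : Integrable (fun y => Real.exp (-E y)))
    (hZpos : 0 < ∫ y, Real.exp (-E y))
    (α σ : ℝ) (hα : 0 < α) (hσ : 0 < σ)
    (x : EuclideanSpace ℝ (Fin d))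
    (p : EuclideanSpace ℝ (Fin d) → ℝ)
    (hp : p = fun y => Real.exp (-E y) / ∫ z, Real.exp (-E z))
    (hInt1 : ∀ᶠ x' in nhds x, Integrable (fun y => p y * gaussKernel d α σ x' y))
    (hInt2 : ∀ᶠ x' in nhds x,
      Integrable (fun y => ‖gradient E y‖ * (p y * gaussKernel d α σ x' y)))
    (hTail : Tendsto (fun y => p y * gaussKernel d α σ x y) (cocompact _) (nhds 0))
    (hDom : ∃ (ε : ℝ) (bound : EuclideanSpace ℝ (Fin d) → ℝ), 0 < ε ∧
      Integrable bound ∧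
      ∀ y, ∀ x' ∈ Metric.ball x ε,
        ‖gradient (fun x'' => p y * gaussKernel d α σ x'' y) x'‖ ≤ bound y) :
    gradient (fun x' => Real.log (∫ y, p y * gaussKernel d α σ x' y)) x
      = (1 / α) • ∫ y,
          ((p y * gaussKernel d α σ x y) / ∫ z, p z * gaussKernel d α σ x z) •
            (-(gradient E y)) :=
  score_eq_posterior_force_average_general d E hE hZpos α σ hα x p hp hInt1 hInt2 hDom
end

section
/- Let p : ℝ^d → ℝ be a continuously differentiable probability density, α > 0, σ > 0, and x ∈ ℝ^d. Assume that y ↦ p(y)·φ_{α,σ}(x', y) and y ↦ ‖∇p(y)‖·φ_{α,σ}(x', y) are integrable for all x' in a neighborhood of x, that p(y)·φ_{α,σ}(x, y) → 0 as ‖y‖ → ∞, and that differentiation under the integral sign in x is justified by an integrable dominating function. Then ∇_x ∫_{ℝ^d} p(y) φ_{α,σ}(x, y) dy = (1/α) · ∫_{ℝ^d} (∇p)(y) · φ_{α,σ}(x, y) dy. -/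
open MeasureTheory Filter

/-!
Differentiating under the integral sign gives `∇ₓ ∫ p φ(x, ·) = ∫ p ∇ₓφ(x, ·)`. Since
`φ` depends on `x` and `y` only through `x - α • y`, its gradients satisfy `∇_y φ = -α ∇ₓ φ`,
and integrating by parts on `ℝᵈ` moves `∇_y` from `φ` onto `p`.
-/

open InnerProductSpace
open scoped Gradient RealInnerProductSpace

section Gradient

variable {F : Type*} [NormedAddCommGroup F] [InnerProductSpace ℝ F] [CompleteSpace F]

theorem HasGradientAt.const_mul {f : F → ℝ} {f' x : F} (c : ℝ) (h : HasGradientAt f f' x) :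
    HasGradientAt (fun y => c * f y) (c • f') x := by
  rw [hasGradientAt_iff_hasFDerivAt, map_smul]
  exact (hasGradientAt_iff_hasFDerivAt.1 h).const_mul c

theorem ContDiff.continuous_gradient {f : F → ℝ} {n : WithTop ℕ∞} (hf : ContDiff ℝ n f)
    (hn : n ≠ 0) : Continuous (∇ f) :=
  (toDual ℝ F).symm.continuous.comp (hf.continuous_fderiv hn)

theorem hasGradientAt_integral_of_dominated_of_gradient_le {Ω : Type*} [MeasurableSpace Ω]
    {μ : Measure Ω} {f : F → Ω → ℝ} {g : F → Ω → F} {x₀ : F} {s : Set F} {bound : Ω → ℝ}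
    (hs : s ∈ nhds x₀) (hf_meas : ∀ᶠ x in nhds x₀, AEStronglyMeasurable (f x) μ)
    (hf_int : Integrable (f x₀) μ) (hg_meas : AEStronglyMeasurable (g x₀) μ)
    (h_bound : ∀ᵐ a ∂μ, ∀ x ∈ s, ‖g x a‖ ≤ bound a) (bound_integrable : Integrable bound μ)
    (h_diff : ∀ᵐ a ∂μ, ∀ x ∈ s, HasGradientAt (f · a) (g x a) x) :
    HasGradientAt (fun x => ∫ a, f x a ∂μ) (∫ a, g x₀ a ∂μ) x₀ := by
  rw [hasGradientAt_iff_hasFDerivAt]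
  refine (hasFDerivAt_integral_of_dominated_of_fderiv_le (F' := fun x a => toDual ℝ F (g x a)) hs
    hf_meas hf_int ((toDual ℝ F).continuous.comp_aestronglyMeasurable hg_meas) ?_
    bound_integrable ?_).congr_fderiv ((toDual ℝ F).toLinearIsometry.integral_comp_comm _)
  · simpa only [LinearIsometryEquiv.norm_map] using h_bound
  · simpa only [hasGradientAt_iff_hasFDerivAt] using h_diff

theorem integral_smul_gradient_eq_neg_integral_smul_gradient [FiniteDimensional ℝ F]
    [MeasurableSpace F] [BorelSpace F] {μ : Measure F} [μ.IsAddHaarMeasure] {f g : F → ℝ}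
    (hf'g : Integrable (fun x => g x • ∇ f x) μ) (hfg' : Integrable (fun x => f x • ∇ g x) μ)
    (hfg : Integrable (fun x => f x * g x) μ) (hf : Differentiable ℝ f)
    (hg : Differentiable ℝ g) :
    ∫ x, f x • ∇ g x ∂μ = -∫ x, g x • ∇ f x ∂μ := by
  refine ext_inner_right ℝ fun v => ?_
  have hinner (c : ℝ) (h : F → ℝ) (x : F) : ⟪c • ∇ h x, v⟫ = c * fderiv ℝ h x v := by
    rw [real_inner_smul_left, inner_gradient_left]
  have hdir {c h : F → ℝ} (hint : Integrable (fun x => c x • ∇ h x) μ) :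
      ⟪∫ x, c x • ∇ h x ∂μ, v⟫ = ∫ x, c x * fderiv ℝ h x v ∂μ := by
    rw [real_inner_comm, ← integral_inner hint]
    simp only [real_inner_comm _ v, hinner]
  rw [inner_neg_left, hdir hfg', hdir hf'g]
  simp_rw [mul_comm (g _)]
  refine integral_mul_fderiv_eq_neg_fderiv_mul_of_integrable ?_ ?_ hfg
    (fun x _ => hf x) (fun x _ => hg x)
  · simpa only [hinner, mul_comm (g _)] using hf'g.inner_const (𝕜 := ℝ) v
  · simpa only [hinner] using hfg'.inner_const (𝕜 := ℝ) v

end Gradient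

theorem HasFDerivAt.exp_neg_norm_sq_div {E F : Type*} [NormedAddCommGroup E] [NormedSpace ℝ E]
    [NormedAddCommGroup F] [InnerProductSpace ℝ F] {f : E → F} {f' : E →L[ℝ] F} {x : E}
    (hf : HasFDerivAt f f' x) (σ : ℝ) :
    HasFDerivAt (fun x => Real.exp (-‖f x‖ ^ 2 / (2 * σ ^ 2)))
      ((-(Real.exp (-‖f x‖ ^ 2 / (2 * σ ^ 2)) / σ ^ 2)) • (innerSL ℝ (f x)).comp f') x := by
  convert (hf.norm_sq.const_mul (-(2 * σ ^ 2)⁻¹)).exp using 1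
  · ext x
    congr 1
    ring
  ext v
  rw [show -(2 * σ ^ 2)⁻¹ * ‖f x‖ ^ 2 = -‖f x‖ ^ 2 / (2 * σ ^ 2) by ring]
  simp only [neg_smul, neg_apply, smul_apply, ContinuousLinearMap.comp_apply, coe_innerSL_apply,
    smul_eq_mul, nsmul_eq_mul, Nat.cast_ofNat]
  ring

section GaussKernel

variable {d : ℕ} (α σ : ℝ) (x y : EuclideanSpace ℝ (Fin d))

theorem hasGradientAt_gaussKernel_left :
    HasGradientAt (gaussKernel d α σ · y) (-(gaussKernel d α σ x y / σ ^ 2) • (x - α • y)) x := by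
  rw [hasGradientAt_iff_hasFDerivAt]
  refine (((hasFDerivAt_id x).sub_const (α • y)).exp_neg_norm_sq_div σ).congr_fderiv ?_
  ext v
  simp [gaussKernel]

theorem hasGradientAt_gaussKernel_right :
    HasGradientAt (gaussKernel d α σ x ·)
      ((α * gaussKernel d α σ x y / σ ^ 2) • (x - α • y)) y := by
  rw [hasGradientAt_iff_hasFDerivAt]
  refine ((((hasFDerivAt_id y).const_smul α).const_sub x).exp_neg_norm_sq_div σ).congr_fderiv ?_
  ext v
  simp only [Pi.smul_apply, id_eq, map_sub, map_smul, ContinuousLinearMap.comp_neg,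
    ContinuousLinearMap.comp_smulₛₗ, Real.ringHom_apply, ContinuousLinearMap.comp_id, smul_neg,
    neg_smul, neg_neg, smul_apply, sub_apply, coe_innerSL_apply, smul_eq_mul, gaussKernel,
    toDual_apply_apply]
  ring

theorem gradient_gaussKernel_right :
    ∇ (gaussKernel d α σ x ·) y = -α • ∇ (gaussKernel d α σ · y) x := by
  rw [(hasGradientAt_gaussKernel_left α σ x y).gradient,
    (hasGradientAt_gaussKernel_right α σ x y).gradient, smul_smul]
  congr 1
  ring

theorem differentiable_gaussKernel_right : Differentiable ℝ (gaussKernel d α σ x ·) :=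
  fun y => (hasGradientAt_gaussKernel_right α σ x y).differentiableAt

theorem continuous_gradient_gaussKernel_left :
    Continuous fun y => ∇ (gaussKernel d α σ · y) x := by
  have hκ := (differentiable_gaussKernel_right α σ x).continuous
  simp only [fun y => (hasGradientAt_gaussKernel_left α σ x y).gradient]
  fun_prop

theorem hasGradientAt_const_mul_gaussKernel_left (c : ℝ) :
    HasGradientAt (fun x' => c * gaussKernel d α σ x' y) (c • ∇ (gaussKernel d α σ · y) x) x :=
  (hasGradientAt_gaussKernel_left α σ x y).differentiableAt.hasGradientAt.const_mul c

theorem hasGradientAt_integral_mul_gaussKernel {p : EuclideanSpace ℝ (Fin d) → ℝ}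
    (hp : Continuous p) {s : Set (EuclideanSpace ℝ (Fin d))} (hs : s ∈ nhds x)
    {bound : EuclideanSpace ℝ (Fin d) → ℝ} (hbound_int : Integrable bound)
    (hint : ∀ᶠ x' in nhds x, Integrable fun y => p y * gaussKernel d α σ x' y)
    (hbound : ∀ y, ∀ x' ∈ s, ‖p y • ∇ (gaussKernel d α σ · y) x'‖ ≤ bound y) :
    HasGradientAt (fun x' => ∫ y, p y * gaussKernel d α σ x' y)
      (∫ y, p y • ∇ (gaussKernel d α σ · y) x) x :=
  hasGradientAt_integral_of_dominated_of_gradient_le hs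
    (hint.mono fun _ h => h.aestronglyMeasurable) hint.self_of_nhds
    (hp.smul (continuous_gradient_gaussKernel_left α σ x)).aestronglyMeasurable
    (ae_of_all _ hbound) hbound_int
    (ae_of_all _ fun y x' _ => hasGradientAt_const_mul_gaussKernel_left α σ x' y (p y))

end GaussKernel

theorem gradient_noised_marginal_eq_smoothed_gradient_general (d : ℕ)
    (p : EuclideanSpace ℝ (Fin d) → ℝ) (hp : ContDiff ℝ 1 p)
    (α σ : ℝ) (hα : 0 < α)
    (x : EuclideanSpace ℝ (Fin d))
    (hInt1 : ∀ᶠ x' in nhds x, Integrable (fun y => p y * gaussKernel d α σ x' y))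
    (hInt2 : ∀ᶠ x' in nhds x,
      Integrable (fun y => ‖gradient p y‖ * gaussKernel d α σ x' y))
    (hDom : ∃ (ε : ℝ) (bound : EuclideanSpace ℝ (Fin d) → ℝ), 0 < ε ∧
      Integrable bound ∧
      ∀ y, ∀ x' ∈ Metric.ball x ε,
        ‖gradient (fun x'' => p y * gaussKernel d α σ x'' y) x'‖ ≤ bound y) :
    gradient (fun x' => ∫ y, p y * gaussKernel d α σ x' y) x
      = (1 / α) • ∫ y, gaussKernel d α σ x y • gradient p y := by
  obtain ⟨ε, bound, hε, hbound_int, hbound⟩ := hDom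
  have hbound_left : ∀ y, ∀ x' ∈ Metric.ball x ε, ‖p y • ∇ (gaussKernel d α σ · y) x'‖ ≤ bound y :=
    fun y x' hx' => (hasGradientAt_const_mul_gaussKernel_left α σ x' y (p y)).gradient ▸
      hbound y x' hx'
  have hp_grad_left : Integrable fun y => p y • ∇ (gaussKernel d α σ · y) x :=
    hbound_int.mono'
      (hp.continuous.smul (continuous_gradient_gaussKernel_left α σ x)).aestronglyMeasurable
      (ae_of_all _ fun y => hbound_left y x (Metric.mem_ball_self hε))
  have hmarg := hasGradientAt_integral_mul_gaussKernel α σ x hp.continuous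
    (Metric.ball_mem_nhds x hε) hbound_int hInt1 hbound_left
  have hκ_grad_p : Integrable fun y => gaussKernel d α σ x y • ∇ p y := by
    refine hInt2.self_of_nhds.congr'
      (((differentiable_gaussKernel_right α σ x).continuous.smul
        (hp.continuous_gradient one_ne_zero)).aestronglyMeasurable) (ae_of_all _ fun y => ?_)
    rw [norm_smul, norm_mul, norm_norm, mul_comm]
  have hp_grad_right : Integrable fun y => p y • ∇ (gaussKernel d α σ x ·) y := by
    refine (hp_grad_left.smul (-α)).congr (ae_of_all _ fun y => ?_)
    simp only [Pi.smul_apply, gradient_gaussKernel_right, smul_comm (p y)]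
  have hibp := integral_smul_gradient_eq_neg_integral_smul_gradient hκ_grad_p hp_grad_right
    hInt1.self_of_nhds (hp.differentiable one_ne_zero) (differentiable_gaussKernel_right α σ x)
  calc ∇ (fun x' => ∫ y, p y * gaussKernel d α σ x' y) x
      = ∫ y, p y • ∇ (gaussKernel d α σ · y) x := hmarg.gradient
    _ = -(1 / α) • ∫ y, p y • ∇ (gaussKernel d α σ x ·) y := by
      simp_rw [gradient_gaussKernel_right, smul_comm (p _) (-α)]
      rw [integral_smul, smul_smul, neg_mul_neg, one_div, inv_mul_cancel₀ hα.ne', one_smul]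
    _ = (1 / α) • ∫ y, gaussKernel d α σ x y • ∇ p y := by rw [hibp, smul_neg, neg_smul, neg_neg]

/-- **Gradient of the noised marginal via integration by parts.**
Let `p : ℝ^d → ℝ` be a `C¹` probability density, `α > 0`, `σ > 0`, `x ∈ ℝ^d`.
Assume `y ↦ p(y)φ_{α,σ}(x', y)` and `y ↦ ‖∇p(y)‖φ_{α,σ}(x', y)` are integrable for
all `x'` near `x`, that `p(y)φ_{α,σ}(x, y) → 0` as `‖y‖ → ∞`, and that
differentiation under the integral sign in `x` is justified by an integrable
dominating function.  Then
`∇_x ∫ p(y) φ_{α,σ}(x, y) dy = (1/α) ∫ (∇p)(y) φ_{α,σ}(x, y) dy`. -/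
theorem gradient_noised_marginal_eq_smoothed_gradient (d : ℕ)
    (p : EuclideanSpace ℝ (Fin d) → ℝ) (hp : ContDiff ℝ 1 p)
    (hp0 : ∀ y, 0 ≤ p y) (hpI : Integrable p) (hpP : ∫ y, p y = 1)
    (α σ : ℝ) (hα : 0 < α) (hσ : 0 < σ)
    (x : EuclideanSpace ℝ (Fin d))
    (hInt1 : ∀ᶠ x' in nhds x, Integrable (fun y => p y * gaussKernel d α σ x' y))
    (hInt2 : ∀ᶠ x' in nhds x,
      Integrable (fun y => ‖gradient p y‖ * gaussKernel d α σ x' y))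
    (hTail : Tendsto (fun y => p y * gaussKernel d α σ x y) (cocompact _) (nhds 0))
    (hDom : ∃ (ε : ℝ) (bound : EuclideanSpace ℝ (Fin d) → ℝ), 0 < ε ∧
      Integrable bound ∧
      ∀ y, ∀ x' ∈ Metric.ball x ε,
        ‖gradient (fun x'' => p y * gaussKernel d α σ x'' y) x'‖ ≤ bound y) :
    gradient (fun x' => ∫ y, p y * gaussKernel d α σ x' y) x
      = (1 / α) • ∫ y, gaussKernel d α σ x y • gradient p y :=
  gradient_noised_marginal_eq_smoothed_gradient_general d p hp α σ hα x hInt1 hInt2 hDom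
end

section
/- Fix μ, y ∈ ℝ, v > 0, s > 0, and α ≠ 0. Let π_y denote the probability measure on ℝ with density proportional to x ↦ exp(−(x − μ)²/(2v)) · exp(−(y − α·x)²/(2s²)). Then the variance under π_y of the DSM target x ↦ (α·x − y)/s² equals α²·v/(s²·(α²v + s²)), the variance under π_y of the PSM target x ↦ −(x − μ)/v equals s²/(v·(α²v + s²)), and the PSM target variance is strictly smaller than the DSM target variance if and only if s² < |α|·v. -/
/-!
Completing the square shows that the unnormalised posterior density is a constant multiple
of the Gaussian density with mean `(μ s² + α v y)/(α² v + s²)` and variance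
`v s²/(α² v + s²)`. Both score targets are affine in `x`, so their posterior variances are
the squared slopes `α²/s⁴` and `1/v²` times that variance; comparing them amounts to
comparing `s⁴` with `α² v²`.
-/

open MeasureTheory ProbabilityTheory Real
open scoped NNReal

noncomputable section

section WeightedMoments

variable {Ω : Type*} [MeasurableSpace Ω] (μ : Measure Ω)

/-- `f` is an unnormalised density with respect to `μ`. -/
def weightedMean (f g : Ω → ℝ) : ℝ := (∫ x, g x * f x ∂μ) / ∫ x, f x ∂μ

def weightedVariance (f g : Ω → ℝ) : ℝ :=
  weightedMean μ f fun x => (g x - weightedMean μ f g) ^ 2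

variable {μ}

theorem weightedMean_const_mul {C : ℝ} (hC : C ≠ 0) {p : Ω → ℝ} (hp : ∫ x, p x ∂μ = 1)
    (g : Ω → ℝ) : weightedMean μ (fun x => C * p x) g = ∫ x, g x * p x ∂μ := by
  simp only [weightedMean, mul_left_comm (g _), integral_const_mul, hp, mul_one]
  exact mul_div_cancel_left₀ _ hC

end WeightedMoments

theorem weightedMean_const_mul_gaussianPDFReal {C : ℝ} (hC : C ≠ 0) {m : ℝ} {w : ℝ≥0}
    (hw : w ≠ 0) (g : ℝ → ℝ) :
    weightedMean volume (fun x => C * gaussianPDFReal m w x) g =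
      ∫ x, g x ∂gaussianReal m w := by
  rw [weightedMean_const_mul hC (integral_gaussianPDFReal_eq_one m hw),
    integral_gaussianReal_eq_integral_smul hw]
  simp only [smul_eq_mul, mul_comm]

theorem weightedVariance_const_mul_gaussianPDFReal {C : ℝ} (hC : C ≠ 0) {m : ℝ} {w : ℝ≥0}
    (hw : w ≠ 0) {g : ℝ → ℝ} (hg : AEMeasurable g (gaussianReal m w)) :
    weightedVariance volume (fun x => C * gaussianPDFReal m w x) g = Var[g; gaussianReal m w] := by
  rw [weightedVariance, weightedMean_const_mul_gaussianPDFReal hC hw,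
    weightedMean_const_mul_gaussianPDFReal hC hw, variance_eq_integral hg]

theorem variance_affine_gaussianReal (m : ℝ) (w : ℝ≥0) (a b : ℝ) :
    Var[fun x => a * x + b; gaussianReal m w] = a ^ 2 * w := by
  rw [variance_add_const (by fun_prop), variance_const_mul, variance_fun_id_gaussianReal]

section Posterior

variable (μ y v s α : ℝ)

def posteriorMean : ℝ := (μ * s ^ 2 + α * v * y) / (α ^ 2 * v + s ^ 2)

def posteriorVar : ℝ≥0 := Real.toNNReal (v * s ^ 2 / (α ^ 2 * v + s ^ 2))

variable {μ y v s α}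

theorem coe_posteriorVar (hv : 0 ≤ v) :
    (posteriorVar v s α : ℝ) = v * s ^ 2 / (α ^ 2 * v + s ^ 2) :=
  Real.coe_toNNReal _ (by positivity)

theorem posteriorVar_pos (hv : 0 < v) (hs : s ≠ 0) : 0 < posteriorVar v s α := by
  rw [posteriorVar, Real.toNNReal_pos]
  positivity

theorem prior_mul_likelihood_eq (hv : 0 < v) (hs : s ≠ 0) (x : ℝ) :
    exp (-(x - μ) ^ 2 / (2 * v)) * exp (-(y - α * x) ^ 2 / (2 * s ^ 2)) =
      (√(2 * π * posteriorVar v s α) * exp (-(y - α * μ) ^ 2 / (2 * (α ^ 2 * v + s ^ 2)))) *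
        gaussianPDFReal (posteriorMean μ y v s α) (posteriorVar v s α) x := by
  have hw : (0 : ℝ) < posteriorVar v s α := posteriorVar_pos hv hs
  rw [gaussianPDFReal, mul_mul_mul_comm, mul_inv_cancel₀ (by positivity), one_mul,
    ← exp_add, ← exp_add, posteriorMean, coe_posteriorVar hv.le]
  congr 1
  field_simp
  ring

end Posterior

theorem div_lt_div_iff_sq_lt_abs_mul {v s α A : ℝ} (hv : 0 < v) (hs : s ≠ 0) (hA : 0 < A) :
    s ^ 2 / (v * A) < α ^ 2 * v / (s ^ 2 * A) ↔ s ^ 2 < |α| * v := by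
  rw [div_lt_div_iff₀ (by positivity) (by positivity),
    show s ^ 2 * (s ^ 2 * A) = (s ^ 2) ^ 2 * A by ring,
    show α ^ 2 * v * (v * A) = (α * v) ^ 2 * A by ring,
    mul_lt_mul_iff_of_pos_right hA, sq_lt_sq, abs_mul, abs_of_pos hv,
    abs_of_pos (by positivity)]

end

theorem psm_dsm_posterior_variances_general (μ y v s α : ℝ)
    (hv : 0 < v) (hs : 0 < s) :
    let f : ℝ → ℝ := fun x =>
      Real.exp (-(x - μ) ^ 2 / (2 * v)) * Real.exp (-(y - α * x) ^ 2 / (2 * s ^ 2))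
    let Z : ℝ := ∫ x, f x
    let varOf : (ℝ → ℝ) → ℝ := fun g =>
      (∫ x, (g x - (∫ x', g x' * f x') / Z) ^ 2 * f x) / Z
    varOf (fun x => (α * x - y) / s ^ 2) = α ^ 2 * v / (s ^ 2 * (α ^ 2 * v + s ^ 2)) ∧
    varOf (fun x => -(x - μ) / v) = s ^ 2 / (v * (α ^ 2 * v + s ^ 2)) ∧
    (varOf (fun x => -(x - μ) / v) < varOf (fun x => (α * x - y) / s ^ 2) ↔
      s ^ 2 < |α| * v) := by
  intro f Z varOf
  have hw : 0 < posteriorVar v s α := posteriorVar_pos hv hs.ne'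
  obtain ⟨C, hC, hf⟩ : ∃ C ≠ 0,
      f = fun x => C * gaussianPDFReal (posteriorMean μ y v s α) (posteriorVar v s α) x :=
    ⟨_, by positivity, funext (prior_mul_likelihood_eq hv hs.ne')⟩
  have h_affine (a b : ℝ) :
      varOf (fun x => a * x + b) = a ^ 2 * (v * s ^ 2 / (α ^ 2 * v + s ^ 2)) := by
    change weightedVariance volume f _ = _
    rw [hf, weightedVariance_const_mul_gaussianPDFReal hC hw.ne' (by fun_prop),
      variance_affine_gaussianReal, coe_posteriorVar hv.le]
  have h_dsm :
      varOf (fun x => (α * x - y) / s ^ 2) = α ^ 2 * v / (s ^ 2 * (α ^ 2 * v + s ^ 2)) := by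
    convert h_affine (α / s ^ 2) (-y / s ^ 2) using 2
    · ext x; ring
    · field_simp
  have h_psm : varOf (fun x => -(x - μ) / v) = s ^ 2 / (v * (α ^ 2 * v + s ^ 2)) := by
    convert h_affine (-1 / v) (μ / v) using 2
    · ext x; ring
    · field_simp
  rw [h_dsm, h_psm]
  exact ⟨rfl, rfl, div_lt_div_iff_sq_lt_abs_mul hv hs.ne' (by positivity)⟩

/-- **Posterior variances of the DSM and PSM targets in the 1D Gaussian model.**
Fix `μ, y ∈ ℝ`, `v > 0`, `s > 0`, `α ≠ 0`, and let `π_y` be the probability measure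
with density proportional to `x ↦ exp(−(x − μ)²/(2v)) · exp(−(y − αx)²/(2s²))`.
Then the variance under `π_y` of the DSM target `x ↦ (αx − y)/s²` equals
`α²v/(s²(α²v + s²))`, the variance under `π_y` of the PSM target `x ↦ −(x − μ)/v`
equals `s²/(v(α²v + s²))`, and the PSM target variance is strictly smaller than the
DSM target variance iff `s² < |α|·v`. -/
theorem psm_dsm_posterior_variances (μ y v s α : ℝ)
    (hv : 0 < v) (hs : 0 < s) (hα : α ≠ 0) :
    let f : ℝ → ℝ := fun x =>
      Real.exp (-(x - μ) ^ 2 / (2 * v)) * Real.exp (-(y - α * x) ^ 2 / (2 * s ^ 2))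
    let Z : ℝ := ∫ x, f x
    let varOf : (ℝ → ℝ) → ℝ := fun g =>
      (∫ x, (g x - (∫ x', g x' * f x') / Z) ^ 2 * f x) / Z
    varOf (fun x => (α * x - y) / s ^ 2) = α ^ 2 * v / (s ^ 2 * (α ^ 2 * v + s ^ 2)) ∧
    varOf (fun x => -(x - μ) / v) = s ^ 2 / (v * (α ^ 2 * v + s ^ 2)) ∧
    (varOf (fun x => -(x - μ) / v) < varOf (fun x => (α * x - y) / s ^ 2) ↔
      s ^ 2 < |α| * v) :=
  psm_dsm_posterior_variances_general μ y v s α hv hs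
end
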